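/- arXiv:1203.5276 — 2 statements merged into one kernel-verified Lean document; each statement's English description precedes it below -/
import Mathlib

section
/- Let f : [a,b] → (0,∞) be a continuous function. Suppose there exist two sequences (x̲_n) and (x̄_n) with a < ⋯ < x̲_n < x̄_n < ⋯ < x̲_2 < x̄_2 < x̲_1 < x̄_1 ≤ b and lim_{n→∞} x̄_n = a, such that for some α > 0 and γ ∈ (0,1) one has f(x̄_n) − f(x̲_n) ≥ α n^{−γ} for all n ∈ ℕ. Then there exists a function g : [a,b] → [0,∞) of bounded variation with g(a) = 0 such that the Riemann–Stieltjes integral ∫_a^y f(x) dg(x) is strictly negative for every y ∈ (a,b]. -/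
/-!
Put a jump `+wₖ` at `x̲ₖ` and a jump `-wₖ` at `x̄ₖ` for the pairs `k ≥ N`, with `wₖ = (k + 1)⁻²`.
Then `g ≥ 0` is a difference of two monotone jump functions, and for continuous `f`
the integral `∫_a^y f dg` is the sum of the jumps weighted by the values of `f` at the jump
points up to `y`. Pairs lying below `y` contribute at most `-α k^{-γ} wₖ`, pairs above `y`
nothing, and at most one pair straddles `y`, contributing at most `M w_{j-1} = M / j²`, where
`M` bounds `|f|` and `j` is the first pair below `y`. The pairs `j ≤ k < 2j` alone contribute
about `-α j^{1-γ} / j²`, which outweighs `M / j²` once `j ≥ N` since `γ < 1`.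
-/

open Set Filter MeasureTheory

/-- The Riemann–Stieltjes sum of `f` with respect to `g` for the tagged partition with
points `t 0, …, t m` and tags `ξ 0, …, ξ (m-1)`. -/
noncomputable def RSSum (f g : ℝ → ℝ) (m : ℕ) (t ξ : ℕ → ℝ) : ℝ :=
  ∑ i ∈ Finset.range m, f (ξ i) * (g (t (i + 1)) - g (t i))

/-- `t`, `ξ` form a tagged partition of `[a, b]` into `m` subintervals. -/
def IsTaggedPartition (a b : ℝ) (m : ℕ) (t ξ : ℕ → ℝ) : Prop :=
  0 < m ∧ t 0 = a ∧ t m = b ∧ (∀ i < m, t i < t (i + 1)) ∧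
    ∀ i < m, ξ i ∈ Set.Icc (t i) (t (i + 1))

/-- `I` is the Riemann–Stieltjes integral `∫_a^b f dg`: the Riemann–Stieltjes sums tend to `I`
as the mesh of the tagged partition tends to zero. -/
def HasRSIntegral (f g : ℝ → ℝ) (a b : ℝ) (I : ℝ) : Prop :=
  ∀ ε > 0, ∃ δ > 0, ∀ (m : ℕ) (t ξ : ℕ → ℝ), IsTaggedPartition a b m t ξ →
    (∀ i < m, t (i + 1) - t i < δ) → |RSSum f g m t ξ - I| < ε

open Classical in
/-- The Riemann–Stieltjes integral `∫_a^b f dg`, defaulting to `0` if it does not exist. -/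
noncomputable def RSIntegral (f g : ℝ → ℝ) (a b : ℝ) : ℝ :=
  if h : ∃ I, HasRSIntegral f g a b I then h.choose else 0


namespace IsTaggedPartition

variable {a b : ℝ} {m : ℕ} {t ξ : ℕ → ℝ}

theorem strictMonoOn (h : IsTaggedPartition a b m t ξ) : StrictMonoOn t (Iic m) :=
  strictMonoOn_Iic_of_lt_succ fun i hi => by simpa using h.2.2.2.1 i hi

theorem point_mono (h : IsTaggedPartition a b m t ξ) {i j : ℕ} (hij : i ≤ j) (hj : j ≤ m) :
    t i ≤ t j :=
  h.strictMonoOn.monotoneOn (hij.trans hj : i ≤ m) hj hij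

theorem tag_mem_Icc (h : IsTaggedPartition a b m t ξ) {i : ℕ} (hi : i < m) : ξ i ∈ Icc a b := by
  rw [← h.2.1, ← h.2.2.1]
  exact ⟨(h.point_mono (Nat.zero_le i) hi.le).trans (h.2.2.2.2 i hi).1,
    (h.2.2.2.2 i hi).2.trans (h.point_mono hi le_rfl)⟩

end IsTaggedPartition

theorem exists_isTaggedPartition_mesh_lt {a b δ : ℝ} (hab : a < b) (hδ : 0 < δ) :
    ∃ m t ξ, IsTaggedPartition a b m t ξ ∧ ∀ i < m, t (i + 1) - t i < δ := by
  obtain ⟨m, hm⟩ := exists_nat_gt ((b - a) / δ)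
  have hm0 : (0 : ℝ) < m := (div_pos (sub_pos.2 hab) hδ).trans hm
  set h := (b - a) / m
  have hh : 0 < h := div_pos (sub_pos.2 hab) hm0
  refine ⟨m, fun i => a + i * h, fun i => a + i * h,
    ⟨by exact_mod_cast hm0, by simp, by simp [h, field], fun i _ => ?_, fun i _ => ?_⟩,
    fun i _ => ?_⟩
  · push_cast; linarith
  · push_cast; constructor <;> linarith
  · push_cast
    calc a + (i + 1) * h - (a + i * h) = h := by ring
      _ < δ := by rwa [div_lt_iff₀ hm0, mul_comm, ← div_lt_iff₀ hδ]

namespace HasRSIntegral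

variable {f g g₁ g₂ : ℝ → ℝ} {a b I I₁ I₂ : ℝ}

theorem unique (hab : a < b) (h₁ : HasRSIntegral f g a b I₁) (h₂ : HasRSIntegral f g a b I₂) :
    I₁ = I₂ := by
  refine eq_of_forall_dist_le fun ε hε => ?_
  obtain ⟨δ₁, hδ₁, H₁⟩ := h₁ (ε / 2) (half_pos hε)
  obtain ⟨δ₂, hδ₂, H₂⟩ := h₂ (ε / 2) (half_pos hε)
  obtain ⟨m, t, ξ, ht, hmesh⟩ := exists_isTaggedPartition_mesh_lt hab (lt_min hδ₁ hδ₂)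
  have e₁ := H₁ m t ξ ht fun i hi => (hmesh i hi).trans_le (min_le_left _ _)
  have e₂ := H₂ m t ξ ht fun i hi => (hmesh i hi).trans_le (min_le_right _ _)
  refine (dist_triangle_left I₁ I₂ (RSSum f g m t ξ)).trans ?_
  rw [Real.dist_eq, Real.dist_eq]
  linarith

theorem rsIntegral_eq (hab : a < b) (h : HasRSIntegral f g a b I) : RSIntegral f g a b = I := by
  have hex : ∃ I, HasRSIntegral f g a b I := ⟨I, h⟩
  rw [RSIntegral, dif_pos hex]
  exact hex.choose_spec.unique hab h

theorem sub (h₁ : HasRSIntegral f g₁ a b I₁) (h₂ : HasRSIntegral f g₂ a b I₂) :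
    HasRSIntegral f (g₁ - g₂) a b (I₁ - I₂) := by
  intro ε hε
  obtain ⟨δ₁, hδ₁, H₁⟩ := h₁ (ε / 2) (half_pos hε)
  obtain ⟨δ₂, hδ₂, H₂⟩ := h₂ (ε / 2) (half_pos hε)
  refine ⟨min δ₁ δ₂, lt_min hδ₁ hδ₂, fun m t ξ ht hmesh => ?_⟩
  have e₁ := H₁ m t ξ ht fun i hi => (hmesh i hi).trans_le (min_le_left _ _)
  have e₂ := H₂ m t ξ ht fun i hi => (hmesh i hi).trans_le (min_le_right _ _)
  have hsub : RSSum f (g₁ - g₂) m t ξ = RSSum f g₁ m t ξ - RSSum f g₂ m t ξ := by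
    simp only [RSSum, Pi.sub_apply, ← Finset.sum_sub_distrib]
    exact Finset.sum_congr rfl fun i _ => by ring
  rw [hsub]
  calc |RSSum f g₁ m t ξ - RSSum f g₂ m t ξ - (I₁ - I₂)|
      ≤ |RSSum f g₁ m t ξ - I₁| + |RSSum f g₂ m t ξ - I₂| := by
        rw [show RSSum f g₁ m t ξ - RSSum f g₂ m t ξ - (I₁ - I₂)
          = (RSSum f g₁ m t ξ - I₁) - (RSSum f g₂ m t ξ - I₂) by ring]
        exact abs_sub _ _
    _ < ε := by linarith

end HasRSIntegral

noncomputable def unitStep (p x : ℝ) : ℝ := if p ≤ x then 1 else 0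

section unitStep

variable {p q x : ℝ}

@[simp] theorem unitStep_of_le (h : p ≤ x) : unitStep p x = 1 := if_pos h

@[simp] theorem unitStep_of_lt (h : x < p) : unitStep p x = 0 := if_neg h.not_ge

theorem unitStep_nonneg (p x : ℝ) : 0 ≤ unitStep p x := by
  unfold unitStep; split_ifs <;> norm_num

theorem unitStep_le_one (p x : ℝ) : unitStep p x ≤ 1 := by
  unfold unitStep; split_ifs <;> norm_num

theorem abs_unitStep_mul_le (p x v : ℝ) : |unitStep p x * v| ≤ |v| := by
  rw [abs_mul, abs_of_nonneg (unitStep_nonneg p x)]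
  exact mul_le_of_le_one_left (abs_nonneg v) (unitStep_le_one p x)

theorem abs_unitStep_mul_le_of_imp {M v : ℝ} (hM : 0 ≤ M) (hv : p ≤ x → |v| ≤ M) :
    |unitStep p x * v| ≤ M := by
  by_cases hpx : p ≤ x
  · exact (abs_unitStep_mul_le p x v).trans (hv hpx)
  · simpa [unitStep_of_lt (not_le.1 hpx)] using hM

theorem monotone_unitStep (p : ℝ) : Monotone (unitStep p) := by
  intro x y hxy
  by_cases hpx : p ≤ x
  · rw [unitStep_of_le hpx, unitStep_of_le (hpx.trans hxy)]
  · rw [unitStep_of_lt (not_le.1 hpx)]; exact unitStep_nonneg p y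

theorem unitStep_le_unitStep (hpq : p ≤ q) (x : ℝ) : unitStep q x ≤ unitStep p x := by
  by_cases hqx : q ≤ x
  · rw [unitStep_of_le hqx, unitStep_of_le (hpq.trans hqx)]
  · rw [unitStep_of_lt (not_le.1 hqx)]; exact unitStep_nonneg p x

end unitStep

theorem IsTaggedPartition.exists_rsSum_unitStep {a b p : ℝ} {m : ℕ} {t ξ : ℕ → ℝ}
    (h : IsTaggedPartition a b m t ξ) (f : ℝ → ℝ) (hp : a < p) :
    ∃ j < m, RSSum f (unitStep p) m t ξ = unitStep p b * f (ξ j) ∧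
      (p ≤ b → |ξ j - p| ≤ t (j + 1) - t j) := by
  obtain ⟨hm, h0, hmb, -, hξ⟩ := id h
  by_cases hpb : p ≤ b
  · have hlast : p ≤ t (m - 1 + 1) := by rwa [Nat.sub_add_cancel hm, hmb]
    have hex : ∃ i, p ≤ t (i + 1) := ⟨m - 1, hlast⟩
    set j := Nat.find hex
    have hpj : p ≤ t (j + 1) := Nat.find_spec hex
    have hjm : j < m := (Nat.find_min' hex hlast).trans_lt (by omega)
    have hjp : t j < p := by
      rcases hj : j with _ | i
      · rwa [h0]
      · exact not_le.1 (Nat.find_min hex (by omega : i < j))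
    refine ⟨j, hjm, ?_, fun _ => ?_⟩
    · rw [RSSum, Finset.sum_eq_single_of_mem j (Finset.mem_range.2 hjm), unitStep_of_le hpj,
        unitStep_of_lt hjp, unitStep_of_le hpb]
      · ring
      intro i hi hij
      have him := Finset.mem_range.1 hi
      rcases lt_or_gt_of_ne hij with hij | hij
      · have hip : t (i + 1) < p := not_le.1 (Nat.find_min hex hij)
        rw [unitStep_of_lt hip, unitStep_of_lt ((h.point_mono i.le_succ him).trans_lt hip)]
        ring
      · have hpi : p ≤ t i := hpj.trans (h.point_mono hij him.le)
        rw [unitStep_of_le hpi, unitStep_of_le (hpi.trans (h.point_mono i.le_succ him))]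
        ring
    · obtain ⟨hξl, hξr⟩ := hξ j hjm
      rw [abs_sub_le_iff]
      constructor <;> linarith
  · refine ⟨0, hm, ?_, fun h' => absurd h' hpb⟩
    rw [unitStep_of_lt (not_le.1 hpb), zero_mul, RSSum]
    refine Finset.sum_eq_zero fun i hi => ?_
    have him := Finset.mem_range.1 hi
    have hbp := not_le.1 hpb
    rw [unitStep_of_lt ((hmb ▸ h.point_mono him le_rfl).trans_lt hbp),
      unitStep_of_lt ((hmb ▸ h.point_mono him.le le_rfl).trans_lt hbp)]
    ring

namespace IsTaggedPartition

variable {a b p M : ℝ} {m : ℕ} {t ξ : ℕ → ℝ} {f : ℝ → ℝ}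

theorem abs_rsSum_unitStep_le (h : IsTaggedPartition a b m t ξ)
    (hf : ∀ x ∈ Icc a b, |f x| ≤ M) (hp : a < p) : |RSSum f (unitStep p) m t ξ| ≤ M := by
  obtain ⟨j, hjm, hj, -⟩ := h.exists_rsSum_unitStep f hp
  rw [hj]
  exact (abs_unitStep_mul_le _ _ _).trans (hf _ (h.tag_mem_Icc hjm))

theorem abs_rsSum_unitStep_sub_le {δ ε : ℝ} (h : IsTaggedPartition a b m t ξ)
    (hmesh : ∀ i < m, t (i + 1) - t i < δ)
    (hf : ∀ x ∈ Icc a b, ∀ y ∈ Icc a b, dist x y < δ → dist (f x) (f y) < ε) (hε : 0 ≤ ε)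
    (hp : a < p) : |RSSum f (unitStep p) m t ξ - unitStep p b * f p| ≤ ε := by
  obtain ⟨j, hjm, hj, hjp⟩ := h.exists_rsSum_unitStep f hp
  rw [hj]
  by_cases hpb : p ≤ b
  · rw [unitStep_of_le hpb, one_mul, one_mul, ← Real.dist_eq]
    refine (hf _ (h.tag_mem_Icc hjm) _ ⟨hp.le, hpb⟩ ?_).le
    rw [Real.dist_eq]
    exact (hjp hpb).trans_lt (hmesh j hjm)
  · simpa [unitStep_of_lt (not_le.1 hpb)] using hε

end IsTaggedPartition

theorem Summable.mul_of_abs_le {ι : Type*} {c v : ι → ℝ} {M : ℝ} (hc : Summable c)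
    (hv : ∀ k, |v k| ≤ M) : Summable fun k => c k * v k :=
  (hc.abs.mul_right M).of_norm_bounded fun k => by
    rw [Real.norm_eq_abs, abs_mul]
    exact mul_le_mul_of_nonneg_left (hv k) (abs_nonneg _)

noncomputable def jumpFunction (c p : ℕ → ℝ) (x : ℝ) : ℝ := ∑' k, c k * unitStep (p k) x

section jumpFunction

variable {c p q : ℕ → ℝ}

theorem summable_mul_unitStep (hc : Summable c) (p : ℕ → ℝ) (x : ℝ) :
    Summable fun k => c k * unitStep (p k) x :=
  hc.mul_of_abs_le fun k => by simpa using abs_unitStep_mul_le (p k) x 1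

theorem jumpFunction_eq_zero {x : ℝ} (hp : ∀ k, x < p k) : jumpFunction c p x = 0 := by
  simp [jumpFunction, hp]

theorem jumpFunction_monotone (hc : Summable c) (hc₀ : 0 ≤ c) : Monotone (jumpFunction c p) :=
  fun _ _ hxy => (summable_mul_unitStep hc p _).tsum_le_tsum
    (fun k => mul_le_mul_of_nonneg_left (monotone_unitStep _ hxy) (hc₀ k))
    (summable_mul_unitStep hc p _)

theorem jumpFunction_le_jumpFunction (hc : Summable c) (hc₀ : 0 ≤ c) (hpq : ∀ k, p k ≤ q k)
    (x : ℝ) : jumpFunction c q x ≤ jumpFunction c p x :=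
  (summable_mul_unitStep hc q x).tsum_le_tsum
    (fun k => mul_le_mul_of_nonneg_left (unitStep_le_unitStep (hpq k) x) (hc₀ k))
    (summable_mul_unitStep hc p x)

theorem rsSum_jumpFunction (hc : Summable c) (f : ℝ → ℝ) (m : ℕ) (t ξ : ℕ → ℝ) :
    RSSum f (jumpFunction c p) m t ξ = ∑' k, c k * RSSum f (unitStep (p k)) m t ξ := by
  simp only [RSSum, jumpFunction, Finset.mul_sum]
  rw [Summable.tsum_finsetSum fun i _ => ?_]
  · refine Finset.sum_congr rfl fun i _ => ?_
    rw [← (summable_mul_unitStep hc p _).tsum_sub (summable_mul_unitStep hc p _),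
      ← tsum_mul_left]
    exact tsum_congr fun k => by ring
  · simpa only [mul_left_comm, ← mul_sub] using
      (((summable_mul_unitStep hc p _).sub (summable_mul_unitStep hc p _)).mul_left (f (ξ i)))

end jumpFunction

theorem hasRSIntegral_jumpFunction {f : ℝ → ℝ} {c p : ℕ → ℝ} {a b : ℝ}
    (hf : ContinuousOn f (Icc a b)) (hc : Summable c) (hp : ∀ k, a < p k) :
    HasRSIntegral f (jumpFunction c p) a b (∑' k, c k * (unitStep (p k) b * f (p k))) := by
  obtain ⟨M, hM⟩ := isCompact_Icc.exists_bound_of_continuousOn hf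
  have hfM : ∀ x ∈ Icc a b, |f x| ≤ |M| := fun x hx => (hM x hx).trans (le_abs_self M)
  intro ε hε
  set C := ∑' k, |c k|
  have hε' : 0 < ε / (C + 1) := div_pos hε (by positivity)
  obtain ⟨δ, hδ, hfδ⟩ := Metric.uniformContinuousOn_iff.1
    (isCompact_Icc.uniformContinuousOn_of_continuous hf) _ hε'
  refine ⟨δ, hδ, fun m t ξ ht hmesh => ?_⟩
  have hA : Summable fun k => c k * RSSum f (unitStep (p k)) m t ξ :=
    hc.mul_of_abs_le fun k => ht.abs_rsSum_unitStep_le hfM (hp k)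
  have hB : Summable fun k => c k * (unitStep (p k) b * f (p k)) :=
    hc.mul_of_abs_le fun k =>
      abs_unitStep_mul_le_of_imp (abs_nonneg M) fun hpk => hfM _ ⟨(hp k).le, hpk⟩
  have hclose : ∀ k, ‖c k * RSSum f (unitStep (p k)) m t ξ - c k * (unitStep (p k) b * f (p k))‖
      ≤ |c k| * (ε / (C + 1)) := fun k => by
    rw [Real.norm_eq_abs, ← mul_sub, abs_mul]
    exact mul_le_mul_of_nonneg_left
      (ht.abs_rsSum_unitStep_sub_le hmesh hfδ hε'.le (hp k)) (abs_nonneg _)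
  rw [rsSum_jumpFunction hc, ← hA.tsum_sub hB]
  calc _ ≤ C * (ε / (C + 1)) := tsum_of_norm_bounded (hc.abs.hasSum.mul_right _) hclose
    _ < ε := by
      rw [mul_div_assoc', div_lt_iff₀ (by positivity)]
      nlinarith

theorem eVariationOn_sub_le {α E : Type*} [LinearOrder α] [SeminormedAddCommGroup E]
    (f g : α → E) (s : Set α) :
    eVariationOn (f - g) s ≤ eVariationOn f s + eVariationOn g s := by
  refine iSup_le fun ⟨n, u, hu, us⟩ => ?_
  calc ∑ i ∈ Finset.range n, edist ((f - g) (u (i + 1))) ((f - g) (u i))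
      ≤ ∑ i ∈ Finset.range n,
          (edist (f (u (i + 1))) (f (u i)) + edist (g (u (i + 1))) (g (u i))) :=
        Finset.sum_le_sum fun i _ => edist_vsub_vsub_le _ _ _ _
    _ ≤ eVariationOn f s + eVariationOn g s := by
      rw [Finset.sum_add_distrib]
      exact add_le_add (eVariationOn.sum_le hu us) (eVariationOn.sum_le hu us)

theorem BoundedVariationOn.sub {α E : Type*} [LinearOrder α] [SeminormedAddCommGroup E]
    {f g : α → E} {s : Set α} (hf : BoundedVariationOn f s) (hg : BoundedVariationOn g s) :
    BoundedVariationOn (f - g) s :=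
  ne_top_of_le_ne_top (ENNReal.add_ne_top.2 ⟨hf, hg⟩) (eVariationOn_sub_le f g s)

theorem Monotone.boundedVariationOn_Icc {f : ℝ → ℝ} (hf : Monotone f) {a b : ℝ} (hab : a ≤ b) :
    BoundedVariationOn f (Icc a b) := by
  simpa using (hf.monotoneOn (Icc a b)).locallyBoundedVariationOn a b ⟨le_rfl, hab⟩ ⟨hab, le_rfl⟩

theorem eventually_div_sq_lt_sum_rpow {M α γ : ℝ} (hα : 0 < α) (hγ : γ ∈ Ioo 0 1) :
    ∀ᶠ j : ℕ in atTop, M / (j : ℝ) ^ 2 <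
      ∑ k ∈ Finset.range j, α * ((j : ℝ) + k) ^ (-γ) / ((j : ℝ) + k + 1) ^ 2 := by
  have htend : Tendsto (fun j : ℕ => (2 * (j : ℝ)) ^ (1 - γ)) atTop atTop :=
    (tendsto_rpow_atTop (sub_pos.2 hγ.2)).comp
      (tendsto_natCast_atTop_atTop.const_mul_atTop two_pos)
  filter_upwards [htend.eventually_gt_atTop (8 * M / α), eventually_ge_atTop 1] with j hj hj1
  have hj0 : (0 : ℝ) < j := by exact_mod_cast hj1
  have hterm : ∀ k ∈ Finset.range j, α * (2 * (j : ℝ)) ^ (-γ) / (2 * j) ^ 2 ≤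
      α * ((j : ℝ) + k) ^ (-γ) / ((j : ℝ) + k + 1) ^ 2 := fun k hk => by
    have hkj : (k : ℝ) + 1 ≤ j := by exact_mod_cast Finset.mem_range.1 hk
    gcongr α * ?_ / ?_ ^ 2
    · exact Real.rpow_le_rpow_of_nonpos (by positivity) (by linarith) (by linarith [hγ.1])
    · linarith
  have hpow : (2 * (j : ℝ)) ^ (-γ) = (2 * j) ^ (1 - γ) / (2 * j) := by
    rw [← Real.rpow_sub_one (by positivity), sub_sub_cancel_left]
  calc M / (j : ℝ) ^ 2 = 8 * M / (8 * (j : ℝ) ^ 2) := by field_simp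
    _ < α * (2 * (j : ℝ)) ^ (1 - γ) / (8 * (j : ℝ) ^ 2) := by
        rw [div_lt_iff₀ hα] at hj
        exact div_lt_div_of_pos_right (by linarith) (by positivity)
    _ = j * (α * (2 * (j : ℝ)) ^ (-γ) / (2 * j) ^ 2) := by
        rw [hpow]
        field_simp
        ring
    _ = (Finset.range j).card • (α * (2 * (j : ℝ)) ^ (-γ) / (2 * j) ^ 2) := by simp
    _ ≤ _ := Finset.card_nsmul_le_sum _ _ _ hterm

theorem sum_le_neg_tsum {ι : Type*} {T b : ι → ℝ} (hT : Summable T) (hb₀ : ∀ k, 0 ≤ b k)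
    (hbT : ∀ k, b k ≤ -T k) (s : Finset ι) : ∑ k ∈ s, b k ≤ -∑' k, T k :=
  calc ∑ k ∈ s, b k ≤ ∑ k ∈ s, -T k := Finset.sum_le_sum fun k _ => hbT k
    _ ≤ ∑' k, -T k := hT.neg.sum_le_tsum s fun k _ => (hb₀ k).trans (hbT k)
    _ = -∑' k, T k := tsum_neg

theorem Antitone.exists_le_iff {α : Type*} [Preorder α] {u : ℕ → α} (hu : Antitone u) {y : α}
    (hy : ∃ k, u k ≤ y) : ∃ n, ∀ k, u k ≤ y ↔ n ≤ k := by
  classical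
  exact ⟨Nat.find hy, fun _ => ⟨fun h => Nat.find_min' hy h,
    fun h => (hu h).trans (Nat.find_spec hy)⟩⟩

theorem summable_one_div_add_sq (N : ℕ) : Summable fun k : ℕ => 1 / ((N : ℝ) + k + 1) ^ 2 :=
  ((summable_nat_add_iff (N + 1)).2 (Real.summable_one_div_nat_pow.2 one_lt_two)).congr
    fun k => by push_cast; ring

theorem tsum_sub_tsum_neg_of_oscillation {f : ℝ → ℝ} {XL XU : ℕ → ℝ} {y M α γ : ℝ} {N : ℕ}
    (h_pair : ∀ k, XL k < XU k) (h_order : ∀ k, XU (k + 1) < XL k) (hy : ∃ k, XU k ≤ y)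
    (hML : ∀ k, |f (XL k)| ≤ M) (hMU : ∀ k, |f (XU k)| ≤ M)
    (hα : 0 ≤ α) (h_osc : ∀ k, α * ((N : ℝ) + k) ^ (-γ) ≤ f (XU k) - f (XL k))
    (hN : ∀ j ≥ N, M / (j : ℝ) ^ 2 <
      ∑ k ∈ Finset.range j, α * ((j : ℝ) + k) ^ (-γ) / ((j : ℝ) + k + 1) ^ 2) :
    ∑' k, 1 / ((N : ℝ) + k + 1) ^ 2 * (unitStep (XL k) y * f (XL k)) -
      ∑' k, 1 / ((N : ℝ) + k + 1) ^ 2 * (unitStep (XU k) y * f (XU k)) < 0 := by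
  set c : ℕ → ℝ := fun k => 1 / ((N : ℝ) + k + 1) ^ 2 with hc_def
  set T : ℕ → ℝ := fun k =>
    c k * (unitStep (XL k) y * f (XL k)) - c k * (unitStep (XU k) y * f (XU k)) with hT_def
  have hc₀ : ∀ k, 0 ≤ c k := fun k => by positivity
  have hc : Summable c := summable_one_div_add_sq N
  have hM₀ : 0 ≤ M := (abs_nonneg _).trans (hML 0)
  have hsL := hc.mul_of_abs_le fun k => (abs_unitStep_mul_le (XL k) y _).trans (hML k)
  have hsU := hc.mul_of_abs_le fun k => (abs_unitStep_mul_le (XU k) y _).trans (hMU k)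
  obtain ⟨n, hn⟩ := (antitone_nat_of_succ_le fun k =>
    ((h_order k).trans (h_pair k)).le).exists_le_iff hy
  have hlt : ∀ k < n, y < XU k := fun k hk => not_le.1 fun h => hk.not_ge ((hn k).1 h)
  -- Of the pairs not below `y`, only pair `n - 1` can straddle `y`.
  have hhead : ∑ k ∈ Finset.range n, T k ≤ M / ((N + n : ℕ) : ℝ) ^ 2 := by
    rcases n with _ | n
    · simpa using div_nonneg hM₀ (sq_nonneg _)
    rw [Finset.sum_range_succ, Finset.sum_eq_zero fun k hk => ?_, zero_add]
    · have hXU : y < XU n := hlt n n.lt_succ_self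
      calc T n = c n * (unitStep (XL n) y * f (XL n)) := by simp [T, unitStep_of_lt hXU]
        _ ≤ c n * M := mul_le_mul_of_nonneg_left
            ((le_abs_self _).trans ((abs_unitStep_mul_le _ _ _).trans (hML n))) (hc₀ n)
        _ = M / ((N + (n + 1) : ℕ) : ℝ) ^ 2 := by simp only [hc_def]; push_cast; ring
    · have hXL : y < XL k := (hlt (k + 1) (by simpa using hk)).trans (h_order k)
      simp [T, unitStep_of_lt hXL, unitStep_of_lt (hXL.trans (h_pair k))]
  have htail : ∑ k ∈ Finset.range (N + n),
      α * (((N + n : ℕ) : ℝ) + k) ^ (-γ) / (((N + n : ℕ) : ℝ) + k + 1) ^ 2 ≤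
      -∑' k, T (k + n) := by
    have hterm : ∀ k, α * (((N + n : ℕ) : ℝ) + k) ^ (-γ) / (((N + n : ℕ) : ℝ) + k + 1) ^ 2 ≤
        -T (k + n) := fun k => by
      have hXU := (hn (k + n)).2 le_add_self
      have hXL := (h_pair (k + n)).le.trans hXU
      have hcast : ((N + n : ℕ) : ℝ) + k = (N : ℝ) + ((k + n : ℕ) : ℝ) := by push_cast; ring
      simp only [hT_def, hc_def, unitStep_of_le hXU, unitStep_of_le hXL, one_mul, hcast]
      rw [show ∀ D fL fU : ℝ, -(1 / D * fL - 1 / D * fU) = (fU - fL) / D by intros; ring]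
      exact div_le_div_of_nonneg_right (h_osc (k + n)) (by positivity)
    exact sum_le_neg_tsum ((summable_nat_add_iff n).2 (hsL.sub hsU))
      (fun k => by positivity) hterm _
  rw [← hsL.tsum_sub hsU, ← (hsL.sub hsU).sum_add_tsum_nat_add n]
  exact (add_le_add hhead (le_neg.1 htail)).trans_lt (by linarith [hN (N + n) le_self_add])

/-- The `k`-th pair here is the pair number `N + k` of the oscillation hypothesis. -/
theorem exists_rsIntegral_neg_of_oscillation {f : ℝ → ℝ} {a b M α γ : ℝ} {XL XU : ℕ → ℝ}
    {N : ℕ} (hf : ContinuousOn f (Icc a b)) (hM : ∀ x ∈ Icc a b, |f x| ≤ M)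
    (h_lt : ∀ k, a < XL k) (h_pair : ∀ k, XL k < XU k) (h_order : ∀ k, XU (k + 1) < XL k)
    (h_top : XU 0 ≤ b) (h_lim : Tendsto XU atTop (nhds a))
    (hα : 0 ≤ α) (h_osc : ∀ k, α * ((N : ℝ) + k) ^ (-γ) ≤ f (XU k) - f (XL k))
    (hN : ∀ j ≥ N, M / (j : ℝ) ^ 2 <
      ∑ k ∈ Finset.range j, α * ((j : ℝ) + k) ^ (-γ) / ((j : ℝ) + k + 1) ^ 2) :
    ∃ g : ℝ → ℝ, (∀ x ∈ Icc a b, 0 ≤ g x) ∧ BoundedVariationOn g (Icc a b) ∧ g a = 0 ∧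
      ∀ y ∈ Ioc a b, RSIntegral f g a y < 0 := by
  set c := fun k : ℕ => 1 / ((N : ℝ) + k + 1) ^ 2
  have hc : Summable c := summable_one_div_add_sq N
  have hc₀ : 0 ≤ c := fun k => by positivity
  have hXU : ∀ k, a < XU k := fun k => (h_lt k).trans (h_pair k)
  have hXUb : ∀ k, XU k ≤ b := fun k => h_top.trans' <|
    (strictAnti_nat_of_succ_lt fun k => (h_order k).trans (h_pair k)).antitone k.zero_le
  have hab : a ≤ b := ((hXU 0).trans_le h_top).le
  refine ⟨jumpFunction c XL - jumpFunction c XU, fun x _ => ?_, ?_, ?_, fun y ⟨hay, hyb⟩ => ?_⟩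
  · exact sub_nonneg.2 (jumpFunction_le_jumpFunction hc hc₀ (fun k => (h_pair k).le) x)
  · exact ((jumpFunction_monotone hc hc₀).boundedVariationOn_Icc hab).sub
      ((jumpFunction_monotone hc hc₀).boundedVariationOn_Icc hab)
  · simp [jumpFunction_eq_zero h_lt, jumpFunction_eq_zero hXU]
  have hfy := hf.mono (Icc_subset_Icc_right hyb)
  rw [((hasRSIntegral_jumpFunction hfy hc h_lt).sub
    (hasRSIntegral_jumpFunction hfy hc hXU)).rsIntegral_eq hay]
  obtain ⟨k, hk⟩ := (h_lim.eventually (gt_mem_nhds hay)).exists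
  exact tsum_sub_tsum_neg_of_oscillation h_pair h_order ⟨k, hk.le⟩
    (fun k => hM _ ⟨(h_lt k).le, (h_pair k).le.trans (hXUb k)⟩)
    (fun k => hM _ ⟨(hXU k).le, hXUb k⟩) hα h_osc hN

theorem stmt_0_general (a b α γ : ℝ) (f : ℝ → ℝ) (xl xu : ℕ → ℝ)
    (hf_cont : ContinuousOn f (Set.Icc a b))
    (hα : 0 < α) (hγ : γ ∈ Set.Ioo (0 : ℝ) 1)
    (h_lt : ∀ n : ℕ, 1 ≤ n → a < xl n)
    (h_pair : ∀ n : ℕ, 1 ≤ n → xl n < xu n)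
    (h_order : ∀ n : ℕ, 1 ≤ n → xu (n + 1) < xl n)
    (h_top : xu 1 ≤ b)
    (h_lim : Filter.Tendsto xu Filter.atTop (nhds a))
    (h_osc : ∀ n : ℕ, 1 ≤ n → α * (n : ℝ) ^ (-γ) ≤ f (xu n) - f (xl n)) :
    ∃ g : ℝ → ℝ, (∀ x ∈ Set.Icc a b, 0 ≤ g x) ∧
      BoundedVariationOn g (Set.Icc a b) ∧ g a = 0 ∧
      ∀ y ∈ Set.Ioc a b, RSIntegral f g a y < 0 := by
  obtain ⟨M, hM⟩ := isCompact_Icc.exists_bound_of_continuousOn hf_cont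
  obtain ⟨N, hN⟩ := eventually_atTop.1
    ((eventually_div_sq_lt_sum_rpow (M := M) hα hγ).and (eventually_ge_atTop 1))
  have hN1 : ∀ k, 1 ≤ N + k := fun k => (hN N le_rfl).2.trans le_self_add
  refine exists_rsIntegral_neg_of_oscillation (XL := fun k => xl (N + k))
    (XU := fun k => xu (N + k)) hf_cont hM (fun k => h_lt _ (hN1 k))
    (fun k => h_pair _ (hN1 k)) (fun k => by simpa [add_assoc] using h_order _ (hN1 k)) ?_
    (h_lim.comp ((tendsto_add_atTop_nat N).congr fun k => add_comm _ _)) hα.le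
    (fun k => by simpa using h_osc _ (hN1 k)) fun j hj => (hN j hj).1
  exact h_top.trans' <| Nat.rel_of_forall_rel_succ_of_le_of_le (· ≥ ·)
    (fun n hn => ((h_order n hn).trans (h_pair n hn)).le) le_rfl (hN1 0)

/-- Theorem 2 of the paper: if a continuous positive `f` on `[a, b]`
oscillates by at least `α n^{-γ}` along sequences `x̲ₙ < x̄ₙ` accumulating at `a`, then there is
a non-negative function `g` of bounded variation with `g a = 0` whose Riemann–Stieltjes integral
`∫_a^y f dg` is strictly negative for every `y ∈ (a, b]`. -/
theorem stmt_0 (a b α γ : ℝ) (f : ℝ → ℝ) (xl xu : ℕ → ℝ)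
    (hf_cont : ContinuousOn f (Set.Icc a b))
    (hf_pos : ∀ x ∈ Set.Icc a b, 0 < f x)
    (hα : 0 < α) (hγ : γ ∈ Set.Ioo (0 : ℝ) 1)
    (h_lt : ∀ n : ℕ, 1 ≤ n → a < xl n)
    (h_pair : ∀ n : ℕ, 1 ≤ n → xl n < xu n)
    (h_order : ∀ n : ℕ, 1 ≤ n → xu (n + 1) < xl n)
    (h_top : xu 1 ≤ b)
    (h_lim : Filter.Tendsto xu Filter.atTop (nhds a))
    (h_osc : ∀ n : ℕ, 1 ≤ n → α * (n : ℝ) ^ (-γ) ≤ f (xu n) - f (xl n)) :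
    ∃ g : ℝ → ℝ, (∀ x ∈ Set.Icc a b, 0 ≤ g x) ∧
      BoundedVariationOn g (Set.Icc a b) ∧ g a = 0 ∧
      ∀ y ∈ Set.Ioc a b, RSIntegral f g a y < 0 :=
  stmt_0_general a b α γ f xl xu hf_cont hα hγ h_lt h_pair h_order h_top h_lim h_osc
end

section
/- Fix γ ∈ (0,1) and define f : [0,1] → (0,∞) by f(x) := x^γ sin(1/x) + 2 for x > 0 and f(0) := 2. Set x̄_n := (2/π)·1/(4n−3) and x̲_n := (2/π)·1/(4n−1) for n ∈ ℕ. Then f is continuous and strictly positive, the sequences satisfy 0 < ⋯ < x̲_n < x̄_n < ⋯ < x̲_1 < x̄_1 ≤ 1 and lim_{n→∞} x̄_n = 0, and f(x̄_n) − f(x̲_n) ≥ α n^{−γ} for all n ∈ ℕ with α = 2(2π)^{−γ}. -/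
/-!
On `0 < x`, `f x - 2 = x ^ γ * sin (1 / x)` is squeezed by `± x ^ γ`, which gives continuity at
`0` and positivity on `[0, 1]`. The points are chosen so that `1 / x̄ₙ = π / 2 + 2π (n - 1)` and
`1 / x̲ₙ = -π / 2 + 2πn`, where the sine is `1` and `-1`; hence `f x̄ₙ - f x̲ₙ = x̄ₙ ^ γ + x̲ₙ ^ γ`,
and both points are at least `1 / (2πn)`.
-/

open Set Filter MeasureTheory

open Real Topology

theorem continuous_rpow_mul_sin_inv {γ : ℝ} (hγ : 0 < γ) :
    Continuous fun x : ℝ => x ^ γ * sin x⁻¹ := by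
  refine continuous_iff_continuousAt.2 fun x => ?_
  rcases eq_or_ne x 0 with rfl | hx
  · have habs : Tendsto (fun x : ℝ => |x| ^ γ) (𝓝 0) (𝓝 0) := by
      simpa [zero_rpow hγ.ne'] using
        (continuous_abs.rpow_const fun _ => Or.inr hγ.le).tendsto (0 : ℝ)
    rw [ContinuousAt, zero_rpow hγ.ne', zero_mul]
    refine squeeze_zero_norm (fun y => ?_) habs
    rw [norm_mul, Real.norm_eq_abs, Real.norm_eq_abs]
    exact mul_le_of_le_one_right (by positivity) (abs_sin_le_one _) |>.trans'
      (mul_le_mul_of_nonneg_right (abs_rpow_le_abs_rpow y γ) (abs_nonneg _))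
  · exact (continuousAt_rpow_const x γ (Or.inl hx)).mul
      (continuous_sin.continuousAt.comp (continuousAt_inv₀ hx))

theorem abs_rpow_mul_sin_le_one {x γ : ℝ} (hx : x ∈ Icc 0 1) (hγ : 0 ≤ γ) (y : ℝ) :
    |x ^ γ * sin y| ≤ 1 := by
  rw [abs_mul, abs_of_nonneg (rpow_nonneg hx.1 γ)]
  exact mul_le_one₀ (rpow_le_one hx.1 hx.2 hγ) (abs_nonneg _) (abs_sin_le_one y)

/-- With Lean's `0⁻¹ = 0`, the extension by `f 0 = c` is again given by the formula. -/
theorem eqOn_rpow_mul_sin_inv_add {γ c : ℝ} (hγ : 0 < γ) {f : ℝ → ℝ} (hf0 : f 0 = c)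
    (hf : ∀ x, 0 < x → f x = x ^ γ * sin (1 / x) + c) :
    EqOn f (fun x => x ^ γ * sin x⁻¹ + c) (Ici 0) := by
  rintro x (hx : 0 ≤ x)
  rcases hx.eq_or_lt with rfl | hx
  · simp [hf0, zero_rpow hγ.ne']
  · simp [hf x hx]

theorem two_div_pi_mul_one_div_eq_inv (k : ℝ) : 2 / π * (1 / k) = (k * π / 2)⁻¹ := by
  rw [mul_one_div, div_div, inv_div, mul_comm]

theorem sin_four_mul_sub_three_mul_pi_div_two (n : ℤ) : sin ((4 * n - 3) * π / 2) = 1 := by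
  have h : (4 * n - 3) * π / 2 = π / 2 + (n - 1 : ℤ) * (2 * π) := by push_cast; ring
  rw [h, sin_add_int_mul_two_pi, sin_pi_div_two]

theorem sin_four_mul_sub_one_mul_pi_div_two (n : ℤ) : sin ((4 * n - 1) * π / 2) = -1 := by
  have h : (4 * n - 1) * π / 2 = -(π / 2) + n * (2 * π) := by ring
  rw [h, sin_add_int_mul_two_pi, sin_neg, sin_pi_div_two]

theorem inv_mul_pi_div_two_lt {a b : ℝ} (ha : 0 < a) (hab : a < b) :
    (b * π / 2)⁻¹ < (a * π / 2)⁻¹ :=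
  inv_strictAnti₀ (by positivity) (by gcongr)

theorem rpow_neg_le_inv_mul_pi_div_two_rpow {γ n k : ℝ} (hγ : 0 ≤ γ) (hk : 0 < k)
    (hkn : k ≤ 4 * n) : (2 * π) ^ (-γ) * n ^ (-γ) ≤ (k * π / 2)⁻¹ ^ γ := by
  have hn : 0 < n := by linarith
  rw [← mul_rpow (by positivity) hn.le, rpow_neg (by positivity), ← inv_rpow (by positivity)]
  refine rpow_le_rpow (by positivity) (inv_anti₀ (by positivity) ?_) hγ
  nlinarith [pi_pos]

theorem le_rpow_mul_sin_inv_sub {γ : ℝ} (hγ : 0 ≤ γ) {n : ℕ} (hn : 1 ≤ n) :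
    2 * (2 * π) ^ (-γ) * (n : ℝ) ^ (-γ) ≤
      ((4 * n - 3) * π / 2)⁻¹ ^ γ * sin ((4 * n - 3) * π / 2)⁻¹⁻¹ -
        ((4 * n - 1) * π / 2)⁻¹ ^ γ * sin ((4 * n - 1) * π / 2)⁻¹⁻¹ := by
  have hn' : (1 : ℝ) ≤ n := by exact_mod_cast hn
  have h3 := sin_four_mul_sub_three_mul_pi_div_two n
  have h1 := sin_four_mul_sub_one_mul_pi_div_two n
  push_cast at h3 h1
  rw [inv_inv, inv_inv, h3, h1]
  linarith [rpow_neg_le_inv_mul_pi_div_two_rpow (n := n) hγ (k := 4 * n - 3) (by linarith)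
    (by linarith), rpow_neg_le_inv_mul_pi_div_two_rpow (n := n) hγ (k := 4 * n - 1)
    (by linarith) (by linarith)]

theorem tendsto_inv_four_mul_sub_three_mul_pi_div_two :
    Tendsto (fun n : ℕ => ((4 * n - 3) * π / 2)⁻¹) atTop (𝓝 0) :=
  tendsto_inv_atTop_zero.comp <|
    ((tendsto_atTop_add_const_right _ (-3)
      (tendsto_natCast_atTop_atTop.const_mul_atTop four_pos)).atTop_mul_const pi_pos).atTop_div_const
      two_pos

/-- Example 3 of the paper: `f x = x^γ sin (1/x) + 2` (with `f 0 = 2`) is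
continuous and positive on `[0, 1]`, and with `x̄ₙ = (2/π)/(4n−3)`, `x̲ₙ = (2/π)/(4n−1)` it
satisfies the hypotheses of the negative theorem with `α = 2 (2π)^{-γ}`. -/
theorem stmt_9 (γ : ℝ) (hγ : γ ∈ Set.Ioo (0 : ℝ) 1) (f : ℝ → ℝ) (xl xu : ℕ → ℝ)
    (hf0 : f 0 = 2)
    (hf : ∀ x : ℝ, 0 < x → f x = x ^ γ * Real.sin (1 / x) + 2)
    (hxu : ∀ n : ℕ, xu n = 2 / Real.pi * (1 / (4 * (n : ℝ) - 3)))
    (hxl : ∀ n : ℕ, xl n = 2 / Real.pi * (1 / (4 * (n : ℝ) - 1))) :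
    ContinuousOn f (Set.Icc 0 1) ∧
    (∀ x ∈ Set.Icc (0 : ℝ) 1, 0 < f x) ∧
    (∀ n : ℕ, 1 ≤ n → 0 < xl n) ∧
    (∀ n : ℕ, 1 ≤ n → xl n < xu n) ∧
    (∀ n : ℕ, 1 ≤ n → xu (n + 1) < xl n) ∧
    xu 1 ≤ 1 ∧
    Filter.Tendsto xu Filter.atTop (nhds 0) ∧
    (∀ n : ℕ, 1 ≤ n →
      2 * (2 * Real.pi) ^ (-γ) * (n : ℝ) ^ (-γ) ≤ f (xu n) - f (xl n)) := by
  have hγ0 : 0 < γ := hγ.1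
  have hxu' (n : ℕ) : xu n = ((4 * n - 3) * π / 2)⁻¹ :=
    (hxu n).trans (two_div_pi_mul_one_div_eq_inv _)
  have hxl' (n : ℕ) : xl n = ((4 * n - 1) * π / 2)⁻¹ :=
    (hxl n).trans (two_div_pi_mul_one_div_eq_inv _)
  have hfg := eqOn_rpow_mul_sin_inv_add hγ0 hf0 hf
  have hpos {n : ℕ} (hn : 1 ≤ n) : 0 < 4 * (n : ℝ) - 3 := by
    have : (1 : ℝ) ≤ n := by exact_mod_cast hn
    linarith
  have hxl_pos {n : ℕ} (hn : 1 ≤ n) : 0 < xl n := by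
    rw [hxl']
    exact inv_pos.2 (by linarith [mul_pos (hpos hn) pi_pos, pi_pos])
  have hxl_lt_xu {n : ℕ} (hn : 1 ≤ n) : xl n < xu n := by
    rw [hxl', hxu']
    exact inv_mul_pi_div_two_lt (hpos hn) (by linarith)
  refine ⟨((continuous_rpow_mul_sin_inv hγ0).add continuous_const).continuousOn.congr
    (hfg.mono Icc_subset_Ici_self), fun x hx => ?_, @hxl_pos, @hxl_lt_xu, fun n hn => ?_, ?_,
    ?_, fun n hn => ?_⟩
  · rw [hfg hx.1]
    linarith [(abs_le.1 (abs_rpow_mul_sin_le_one hx hγ0.le x⁻¹)).1]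
  · rw [hxl', hxu']
    exact inv_mul_pi_div_two_lt (by linarith [hpos hn]) (by push_cast; linarith)
  · rw [hxu', Nat.cast_one]
    exact inv_le_one_of_one_le₀ (by linarith [pi_gt_three])
  · exact funext hxu' ▸ tendsto_inv_four_mul_sub_three_mul_pi_div_two
  · have hxl := hxl_pos hn
    rw [hfg (hxl.le.trans (hxl_lt_xu hn).le), hfg hxl.le, hxu', hxl']
    linarith [le_rpow_mul_sin_inv_sub hγ0.le hn]
end
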